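/- arXiv:2403.10738 — 2 statements merged into one kernel-verified Lean document; each statement's English description precedes it below -/
import Mathlib

section
/- Let d ≥ 1, let φ_1, …, φ_n be vectors in ℝ^d with ‖φ_i‖₂ ≤ L for all i, let λ > 0, and define Λ_0 = λ·I and Λ_i = λ·I + Σ_{i'=1}^{i} φ_{i'}·φ_{i'}ᵀ for 1 ≤ i ≤ n. Then for any increasing sequence of indices 0 = i_1 < i_2 < … < i_k = n, the number of indices j ∈ {1, …, k−1} for which Λ_{i_{j+1}} ⪯ 2·Λ_{i_j} fails is at most d·log₂(1 + n·L²/λ). -/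
/-!
Each `Λ_i` is positive definite and `i ↦ Λ_i` is monotone in the Loewner order. If `0 ≺ A ⪯ B`,
then `B = A^{1/2} (I + C) A^{1/2}` with `C ⪰ 0`, so `det B = det A · ∏ (1 + μ_i(C))`: the
determinant does not decrease, and if `B ⪯ 2A` fails then some `μ_i(C) > 1` and it at least
doubles. Along the index sequence this gives `2^|J| λ^d ≤ det Λ_n`. On the other hand every
eigenvalue of `Σ φ_i φ_iᵀ` is at most its trace `Σ ‖φ_i‖² ≤ n L²`, so `det Λ_n ≤ (λ + n L²)^d`.
-/

open Matrix
open scoped MatrixOrder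

lemma pow_card_mul_le_of_forall_le_succ {R : Type*} [Semiring R] [PartialOrder R]
    [IsOrderedRing R] {k : ℕ} {g : Fin (k + 1) → R} {c : R} (hc : 0 ≤ c) (s : Finset (Fin k))
    (hle : ∀ j : Fin k, g j.castSucc ≤ g j.succ) (hjump : ∀ j ∈ s, c * g j.castSucc ≤ g j.succ) :
    c ^ s.card * g 0 ≤ g (Fin.last k) := by
  suffices h : ∀ i, c ^ (s.filter (·.castSucc < i)).card * g 0 ≤ g i by
    simpa [Finset.filter_true_of_mem, Fin.castSucc_lt_last] using h (Fin.last k)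
  intro i
  induction i using Fin.induction with
  | zero => simp
  | succ i ih =>
    simp only [Fin.castSucc_lt_succ_iff, Fin.castSucc_lt_castSucc_iff] at ih ⊢
    by_cases hi : i ∈ s
    · have hsplit : s.filter (· ≤ i) = insert i (s.filter (· < i)) := by
        ext j; simp only [Finset.mem_filter, Finset.mem_insert, le_iff_lt_or_eq]; grind
      rw [hsplit, Finset.card_insert_of_notMem (by simp), pow_succ', mul_assoc]
      exact (mul_le_mul_of_nonneg_left ih hc).trans (hjump i hi)
    · have hsplit : s.filter (· ≤ i) = s.filter (· < i) := by
        ext j; simp only [Finset.mem_filter, le_iff_lt_or_eq]; grind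
      rw [hsplit]
      exact ih.trans (hle i)

lemma le_mul_logb_of_two_pow_le_pow {m d : ℕ} {t : ℝ} (h : (2 : ℝ) ^ m ≤ t ^ d) :
    (m : ℝ) ≤ d * Real.logb 2 t := by
  have := Real.logb_le_logb_of_le one_lt_two (by positivity) h
  rwa [Real.logb_pow, Real.logb_pow, Real.logb_self_eq_one one_lt_two, mul_one] at this

namespace Matrix

variable {n : Type*} [Fintype n]

lemma trace_vecMulVec_self (x : EuclideanSpace ℝ n) : (vecMulVec x x).trace = ‖x‖ ^ 2 := by
  rw [trace_vecMulVec, EuclideanSpace.real_norm_sq_eq]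
  simp [dotProduct, sq]

lemma trace_sum_vecMulVec_self_le {ι : Type*} {s : Finset ι} {φ : ι → EuclideanSpace ℝ n} {L : ℝ}
    (hφ : ∀ i ∈ s, ‖φ i‖ ≤ L) : (∑ i ∈ s, vecMulVec (φ i) (φ i)).trace ≤ s.card * L ^ 2 := by
  rw [trace_sum, ← nsmul_eq_mul, ← Finset.sum_const]
  exact Finset.sum_le_sum fun i hi => by
    rw [trace_vecMulVec_self]; gcongr; exact hφ i hi

lemma posSemidef_vecMulVec_self (x : EuclideanSpace ℝ n) : (vecMulVec x x).PosSemidef := by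
  simpa using posSemidef_vecMulVec_self_star x

lemma posSemidef_sum_vecMulVec_self {ι : Type*} (s : Finset ι) (φ : ι → EuclideanSpace ℝ n) :
    (∑ i ∈ s, vecMulVec (φ i) (φ i)).PosSemidef :=
  posSemidef_sum s fun i _ => posSemidef_vecMulVec_self (φ i)

variable [DecidableEq n] {A B C : Matrix n n ℝ}

lemma IsHermitian.det_smul_one_add (hC : C.IsHermitian) (a : ℝ) :
    (a • 1 + C).det = ∏ i, (a + hC.eigenvalues i) := by
  set U := hC.eigenvectorUnitary
  have hconj : a • 1 + C =
      Unitary.conjStarAlgAut ℝ _ U (diagonal fun i => a + hC.eigenvalues i) := by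
    conv_lhs => rw [hC.spectral_theorem]
    rw [← diagonal_add, ← smul_one_eq_diagonal, map_add, map_smul, map_one]
    rfl
  rw [hconj, Unitary.conjStarAlgAut_apply, det_mul_right_comm,
    Unitary.mul_star_self_of_mem U.2, one_mul, det_diagonal]

lemma PosSemidef.eigenvalues_le_trace (hC : C.PosSemidef) (i : n) :
    hC.1.eigenvalues i ≤ C.trace := by
  rw [hC.1.trace_eq_sum_eigenvalues]
  exact Finset.single_le_sum (fun j _ => hC.eigenvalues_nonneg j) (Finset.mem_univ i)

lemma PosSemidef.det_smul_one_add_le {a : ℝ} (ha : 0 ≤ a) (hC : C.PosSemidef) :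
    (a • 1 + C).det ≤ (a + C.trace) ^ Fintype.card n := by
  rw [hC.1.det_smul_one_add, ← Finset.card_univ, ← Finset.prod_const]
  exact Finset.prod_le_prod (fun i _ => add_nonneg ha (hC.eigenvalues_nonneg i))
    fun i _ => by gcongr; exact hC.eigenvalues_le_trace i

lemma PosSemidef.one_le_det_one_add (hC : C.PosSemidef) : 1 ≤ (1 + C).det := by
  rw [← one_smul ℝ (1 : Matrix n n ℝ), hC.1.det_smul_one_add]
  exact Finset.one_le_prod fun i _ => le_add_of_nonneg_right (hC.eigenvalues_nonneg i)

lemma PosSemidef.two_le_det_one_add (hC : C.PosSemidef) (h : ¬ C ≤ 1) : 2 ≤ (1 + C).det := by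
  obtain ⟨i, hi⟩ : ∃ i, 1 < hC.1.eigenvalues i := by
    contrapose! h
    refine CFC.le_one (R := ℝ) (fun x hx => ?_) hC.1.isSelfAdjoint
    obtain ⟨i, rfl⟩ := hC.1.spectrum_real_eq_range_eigenvalues ▸ hx
    exact h i
  rw [← one_smul ℝ (1 : Matrix n n ℝ), hC.1.det_smul_one_add,
    ← Finset.mul_prod_erase _ _ (Finset.mem_univ i)]
  have : 1 ≤ ∏ j ∈ Finset.univ.erase i, (1 + hC.1.eigenvalues j) :=
    Finset.one_le_prod fun j _ => le_add_of_nonneg_right (hC.eigenvalues_nonneg j)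
  nlinarith

lemma PosDef.exists_star_mul_mul_eq_one (hA : A.PosDef) :
    ∃ T : Matrix n n ℝ, IsUnit T ∧ star T * A * T = 1 := by
  set S := CFC.sqrt A
  have hS : IsSelfAdjoint S := (CFC.sqrt_nonneg A).isSelfAdjoint
  have hSS : S * S = A := CFC.sqrt_mul_sqrt_self A hA.posSemidef.nonneg
  have hSdet : IsUnit S.det := by
    refine isUnit_iff_ne_zero.mpr fun h => hA.det_pos.ne' ?_
    rw [← hSS, det_mul, h, zero_mul]
  refine ⟨S⁻¹, (isUnit_nonsing_inv_iff).mpr ((isUnit_iff_isUnit_det S).mpr hSdet), ?_⟩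
  rw [star_eq_conjTranspose, conjTranspose_nonsing_inv, ← star_eq_conjTranspose, hS.star_eq,
    ← hSS, ← mul_assoc, nonsing_inv_mul _ hSdet, one_mul, mul_nonsing_inv _ hSdet]

lemma PosDef.exists_det_eq_det_mul_det_one_add (hA : A.PosDef) (hAB : A ≤ B) :
    ∃ C : Matrix n n ℝ, C.PosSemidef ∧ (C ≤ 1 ↔ B ≤ (2 : ℝ) • A) ∧ B.det = A.det * (1 + C).det := by
  obtain ⟨T, hT, hTAT⟩ := hA.exists_star_mul_mul_eq_one
  set C := star T * (B - A) * T
  have hTBT : star T * B * T = 1 + C := by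
    rw [← hTAT, ← add_mul, ← mul_add, add_sub_cancel]
  have hTBT' : star T * ((2 : ℝ) • A - B) * T = 1 - C := by
    rw [← hTAT, ← sub_mul, ← mul_sub]; congr 2; rw [two_smul]; abel
  refine ⟨C, hAB.conjTranspose_mul_mul_same T, ?_, ?_⟩
  · rw [le_iff, ← hTBT', hT.posSemidef_star_left_conjugate_iff, le_iff]
  · have h1 := congrArg det hTAT
    have h2 := congrArg det hTBT
    simp only [det_mul, det_one] at h1 h2
    linear_combination (-B.det) * h1 + A.det * h2

lemma PosDef.det_le_det_of_le (hA : A.PosDef) (hAB : A ≤ B) : A.det ≤ B.det := by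
  obtain ⟨C, hC, -, hdet⟩ := hA.exists_det_eq_det_mul_det_one_add hAB
  rw [hdet]
  exact le_mul_of_one_le_right hA.det_pos.le hC.one_le_det_one_add

lemma PosDef.two_mul_det_le_det_of_not_le (hA : A.PosDef) (hAB : A ≤ B)
    (h : ¬ B ≤ (2 : ℝ) • A) :
    2 * A.det ≤ B.det := by
  obtain ⟨C, hC, hC1, hdet⟩ := hA.exists_det_eq_det_mul_det_one_add hAB
  rw [hdet, mul_comm]
  exact mul_le_mul_of_nonneg_left (hC.two_le_det_one_add (hC1.not.mpr h)) hA.det_pos.le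

lemma two_pow_ncard_mul_det_le {k : ℕ} {A : Fin (k + 1) → Matrix n n ℝ} (hA : ∀ j, (A j).PosDef)
    (hmono : Monotone A) :
    (2 : ℝ) ^ {j : Fin k | ¬ A j.succ ≤ (2 : ℝ) • A j.castSucc}.ncard * (A 0).det ≤
      (A (Fin.last k)).det := by
  classical
  rw [Set.ncard_eq_toFinset_card']
  have hstep (j : Fin k) : A j.castSucc ≤ A j.succ := hmono (Fin.castSucc_le_succ j)
  exact pow_card_mul_le_of_forall_le_succ (g := fun j => (A j).det) zero_le_two _
    (fun j => (hA _).det_le_det_of_le (hstep j))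
    fun j hj => (hA _).two_mul_det_le_det_of_not_le (hstep j) (Set.mem_toFinset.mp hj)

noncomputable def regularizedGram (lam : ℝ) (φ : ℕ → EuclideanSpace ℝ n) (m : ℕ) : Matrix n n ℝ :=
  lam • 1 + ∑ i ∈ Finset.Icc 1 m, vecMulVec (φ i) (φ i)

variable {lam : ℝ} {φ : ℕ → EuclideanSpace ℝ n}

lemma posDef_regularizedGram (hlam : 0 < lam) (m : ℕ) : (regularizedGram lam φ m).PosDef :=
  (PosDef.one.smul hlam).add_posSemidef (posSemidef_sum_vecMulVec_self _ φ)

lemma regularizedGram_mono : Monotone (regularizedGram lam φ) := fun a b hab => by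
  unfold regularizedGram
  gcongr
  exact fun i _ _ => (posSemidef_vecMulVec_self (φ i)).nonneg

lemma det_regularizedGram_zero : (regularizedGram lam φ 0).det = lam ^ Fintype.card n := by
  simp [regularizedGram]

lemma det_regularizedGram_le (hlam : 0 ≤ lam) {m : ℕ} {L : ℝ}
    (hφ : ∀ i ∈ Finset.Icc 1 m, ‖φ i‖ ≤ L) :
    (regularizedGram lam φ m).det ≤ (lam + m * L ^ 2) ^ Fintype.card n := by
  have hS := posSemidef_sum_vecMulVec_self (Finset.Icc 1 m) φ
  refine (hS.det_smul_one_add_le hlam).trans ?_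
  refine pow_le_pow_left₀ (add_nonneg hlam hS.trace_nonneg) ?_ _
  simpa using trace_sum_vecMulVec_self_le hφ

end Matrix

theorem doubling_indices_bound_general (d n : ℕ) (L lam : ℝ) (hlam : 0 < lam)
    (φ : ℕ → EuclideanSpace ℝ (Fin d)) (hφ : ∀ i ∈ Finset.Icc 1 n, ‖φ i‖ ≤ L)
    (Λ : ℕ → Matrix (Fin d) (Fin d) ℝ)
    (hΛ : ∀ i, Λ i = lam • (1 : Matrix (Fin d) (Fin d) ℝ)
        + ∑ i' ∈ Finset.Icc 1 i, Matrix.vecMulVec (φ i') (φ i'))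
    (k : ℕ) (idx : Fin (k + 1) → ℕ) (hmono : StrictMono idx)
    (h0 : idx 0 = 0) (hlast : idx (Fin.last k) = n) :
    ({j : Fin k | ¬ ((2 : ℝ) • Λ (idx j.castSucc) - Λ (idx j.succ)).PosSemidef}.ncard : ℝ)
      ≤ d * Real.logb 2 (1 + n * L ^ 2 / lam) := by
  obtain rfl : Λ = regularizedGram lam φ := funext hΛ
  have hlower := two_pow_ncard_mul_det_le (fun j => posDef_regularizedGram hlam (idx j))
    ((regularizedGram_mono (lam := lam) (φ := φ)).comp hmono.monotone)
  have hupper := det_regularizedGram_le hlam.le hφ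
  simp only [h0, hlast, det_regularizedGram_zero, Fintype.card_fin] at hlower hupper
  refine le_mul_logb_of_two_pow_le_pow (le_of_mul_le_mul_right ?_ (pow_pos hlam d))
  calc _ ≤ (lam + n * L ^ 2) ^ d := hlower.trans hupper
    _ = (1 + n * L ^ 2 / lam) ^ d * lam ^ d := by rw [← mul_pow]; congr 1; field_simp

/-- Doubling-index bound in Lemma A.6: with `Λ_i = λI + Σ_{i'≤i} φ_{i'}φ_{i'}ᵀ`, `‖φ_i‖₂ ≤ L`,
and any increasing index sequence `0 = i_1 < … < i_k = n`, the number of blocks `j` for which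
`Λ_{i_{j+1}} ⪯ 2 Λ_{i_j}` fails is at most `d log₂(1 + nL²/λ)`. -/
theorem doubling_indices_bound (d n : ℕ) (hd : 1 ≤ d) (L lam : ℝ) (hlam : 0 < lam)
    (φ : ℕ → EuclideanSpace ℝ (Fin d)) (hφ : ∀ i ∈ Finset.Icc 1 n, ‖φ i‖ ≤ L)
    (Λ : ℕ → Matrix (Fin d) (Fin d) ℝ)
    (hΛ : ∀ i, Λ i = lam • (1 : Matrix (Fin d) (Fin d) ℝ)
        + ∑ i' ∈ Finset.Icc 1 i, Matrix.vecMulVec (φ i') (φ i'))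
    (k : ℕ) (idx : Fin (k + 1) → ℕ) (hmono : StrictMono idx)
    (h0 : idx 0 = 0) (hlast : idx (Fin.last k) = n) :
    ({j : Fin k | ¬ ((2 : ℝ) • Λ (idx j.castSucc) - Λ (idx j.succ)).PosSemidef}.ncard : ℝ)
      ≤ d * Real.logb 2 (1 + n * L ^ 2 / lam) :=
  doubling_indices_bound_general d n L lam hlam φ hφ Λ hΛ k idx hmono h0 hlast
end

section
/- Under the finite linear-MDP value-iteration setting below with H ≥ 2, the total variation of the inhomogeneous optimal value functions is bounded by a polynomial in the feature dimension only: Σ_{h=1}^{H−1} ‖V_h − V_{h+1}‖_∞ ≤ 2·d, where ‖v‖_∞ = max_{s∈S} |v(s)|. -/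
/-!
Backward induction gives `V (h + 1) ≤ V h`. So `‖V h - V (h + 1)‖_∞` is attained at a state `s_h`,
and comparing greedy actions bounds it by `B h h`, where `B i j` is the expected decrement
`V (j + 1) - V (j + 2)` after the greedy pair `(s_i, a_i)`. The matrix `B` is nonnegative and its
rows telescope to an expectation of `V 2 ≤ 1`. As `B` factors through `ℝ^d`, its trace is that of
a `d × d` matrix, whose nonzero eigenvalues are eigenvalues of `B`, of modulus at most `1` by
Gershgorin. Hence the total variation is at most `d`.
-/

open scoped RealInnerProductSpace
open Finset Matrix Polynomial

namespace Matrix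

variable {m n : Type*} [Fintype m] [Fintype n] [DecidableEq m] [DecidableEq n]

theorem norm_le_of_isRoot_charpoly {K : Type*} [NormedField K] {A : Matrix n n K} {r : ℝ}
    (hA : ∀ i, ∑ j, ‖A i j‖ ≤ r) {μ : K} (hμ : A.charpoly.IsRoot μ) : ‖μ‖ ≤ r := by
  have hμ' : Module.End.HasEigenvalue (toLin' A) μ := by
    rwa [Module.End.hasEigenvalue_iff_isRoot_charpoly, charpoly_toLin']
  obtain ⟨k, hk⟩ := eigenvalue_mem_ball hμ'
  rw [Metric.mem_closedBall, dist_eq_norm] at hk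
  calc ‖μ‖ ≤ ‖A k k‖ + ‖μ - A k k‖ := norm_le_norm_add_norm_sub' μ (A k k)
    _ ≤ ‖A k k‖ + ∑ j ∈ univ.erase k, ‖A k j‖ := by gcongr
    _ = ∑ j, ‖A k j‖ := add_sum_erase _ (fun j => ‖A k j‖) (mem_univ k)
    _ ≤ r := hA k

theorem isRoot_charpoly_mul_comm {R : Type*} [CommRing R] [IsDomain R] (A : Matrix m n R)
    (B : Matrix n m R) {μ : R} (hμ0 : μ ≠ 0) (hμ : (B * A).charpoly.IsRoot μ) :
    (A * B).charpoly.IsRoot μ := by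
  have h := congr_arg (eval μ) (charpoly_mul_comm' A B)
  simp only [eval_mul, eval_pow, eval_X, hμ.eq_zero, mul_zero] at h
  exact (mul_eq_zero.mp h).resolve_left (pow_ne_zero _ hμ0)

theorem trace_mul_le_card_of_sum_abs_le_one (P : Matrix m n ℝ) (W : Matrix n m ℝ)
    (hPW : ∀ i, ∑ j, |(P * W) i j| ≤ 1) : (P * W).trace ≤ Fintype.card n := by
  set C : Matrix n n ℂ := (W * P).map Complex.ofRealHom
  have hroot : ∀ z ∈ C.charpoly.roots, z.re ≤ 1 := by
    intro z hz
    rcases eq_or_ne z 0 with rfl | hz0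
    · simp
    have hAB : ((P * W).map Complex.ofRealHom).charpoly.IsRoot z := by
      simp only [C, Matrix.map_mul] at hz ⊢
      exact isRoot_charpoly_mul_comm _ _ hz0 (isRoot_of_mem_roots hz)
    refine (Complex.re_le_norm z).trans (norm_le_of_isRoot_charpoly (fun i => ?_) hAB)
    simpa [Complex.norm_real] using hPW i
  have htrace : (P * W).trace = (C.charpoly.roots.map Complex.re).sum := by
    rw [trace_mul_comm, ← Complex.ofReal_re (W * P).trace, ← Complex.coe_reAddGroupHom,
      ← map_multiset_sum, ← trace_eq_sum_roots_charpoly]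
    simp [C, trace, -Matrix.map_mul]
  calc (P * W).trace = (C.charpoly.roots.map Complex.re).sum := htrace
    _ ≤ (C.charpoly.roots.map fun _ => (1 : ℝ)).sum := Multiset.sum_map_le_sum_map _ _ hroot
    _ = Multiset.card C.charpoly.roots := by simp
    _ ≤ Fintype.card n := by
      exact_mod_cast (card_roots' _).trans (charpoly_natDegree_eq_dim C).le

end Matrix

theorem sum_inner_self_le_finrank {ι E : Type*} [Fintype ι] [DecidableEq ι]
    [NormedAddCommGroup E] [InnerProductSpace ℝ E] [FiniteDimensional ℝ E] (x y : ι → E)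
    (hxy₀ : ∀ i j, 0 ≤ ⟪x i, y j⟫) (hxy₁ : ∀ i, ∑ j, ⟪x i, y j⟫ ≤ 1) :
    ∑ i, ⟪x i, y i⟫ ≤ Module.finrank ℝ E := by
  let b := stdOrthonormalBasis ℝ E
  let P : Matrix ι (Fin (Module.finrank ℝ E)) ℝ := Matrix.of fun i k => ⟪x i, b k⟫
  let W : Matrix (Fin (Module.finrank ℝ E)) ι ℝ := Matrix.of fun k j => ⟪b k, y j⟫
  have hPW : ∀ i j, (P * W) i j = ⟪x i, y j⟫ := fun i j => b.sum_inner_mul_inner (x i) (y j)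
  have hPW₁ (i) : ∑ j, |(P * W) i j| ≤ 1 := by simpa [hPW, abs_of_nonneg (hxy₀ _ _)] using hxy₁ i
  simpa [hPW, trace] using trace_mul_le_card_of_sum_abs_le_one P W hPW₁

section Bellman

variable {S A : Type*} [Fintype S] [Fintype A] [Nonempty A]

noncomputable def bellman (P : S → A → S → ℝ) (r : S → A → ℝ) (v : S → ℝ) (s : S) : ℝ :=
  univ.sup' univ_nonempty fun a => r s a + ∑ s', P s a s' * v s'

variable {P : S → A → S → ℝ} {r : S → A → ℝ}

theorem bellman_mono (hP : ∀ s a s', 0 ≤ P s a s') : Monotone (bellman P r) := by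
  intro v w hvw s
  refine sup'_mono_fun fun a _ => ?_
  gcongr with s'
  · exact hP s a s'
  · exact hvw s'

theorem bellman_zero_nonneg (hr : ∀ s a, 0 ≤ r s a) (s : S) : 0 ≤ bellman P r 0 s := by
  obtain ⟨a⟩ := ‹Nonempty A›
  exact le_sup'_of_le _ (mem_univ a) (by simpa using hr s a)

theorem exists_bellman_sub_le (v w : S → ℝ) (s : S) :
    ∃ a, bellman P r v s - bellman P r w s ≤ ∑ s', P s a s' * (v s' - w s') := by
  obtain ⟨a, -, ha⟩ := exists_mem_eq_sup' univ_nonempty fun a => r s a + ∑ s', P s a s' * v s'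
  refine ⟨a, ?_⟩
  have hw : r s a + ∑ s', P s a s' * w s' ≤ bellman P r w s :=
    le_sup' (fun a => r s a + ∑ s', P s a s' * w s') (mem_univ a)
  simp only [mul_sub, sum_sub_distrib]
  rw [bellman, ha]
  linarith

variable {V : ℕ → S → ℝ} {H : ℕ}

theorem value_antitone (hP : ∀ s a s', 0 ≤ P s a s') (hr : ∀ s a, 0 ≤ r s a)
    (hVend : ∀ s, V (H + 1) s = 0)
    (hVrec : ∀ h, 1 ≤ h → h ≤ H → ∀ s, V h s = bellman P r (V (h + 1)) s)
    {h : ℕ} (h1 : 1 ≤ h) (hH : h ≤ H) : V (h + 1) ≤ V h := by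
  induction hH using Nat.decreasingInduction with
  | self =>
    intro s
    rw [hVend, hVrec H h1 le_rfl, show V (H + 1) = 0 from funext hVend]
    exact bellman_zero_nonneg hr s
  | of_succ k hk ih =>
    intro s
    rw [hVrec k h1 hk.le, hVrec (k + 1) (by omega) hk]
    exact bellman_mono hP (ih (by omega)) s

theorem exists_sup'_abs_sub_le [Nonempty S]
    (hVrec : ∀ h, 1 ≤ h → h ≤ H → ∀ s, V h s = bellman P r (V (h + 1)) s)
    {h : ℕ} (h1 : 1 ≤ h) (hH : h + 1 ≤ H) (hanti : V (h + 1) ≤ V h) :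
    ∃ s a, (univ.sup' univ_nonempty fun s => |V h s - V (h + 1) s|) ≤
      ∑ s', P s a s' * (V (h + 1) s' - V (h + 2) s') := by
  obtain ⟨s, -, hs⟩ := exists_mem_eq_sup' univ_nonempty fun s => |V h s - V (h + 1) s|
  obtain ⟨a, ha⟩ := exists_bellman_sub_le (P := P) (r := r) (V (h + 1)) (V (h + 2)) s
  refine ⟨s, a, ?_⟩
  rw [hs, abs_of_nonneg (sub_nonneg.2 (hanti s)), hVrec h h1 (by omega),
    hVrec (h + 1) (by omega) hH]
  exact ha

theorem sum_Icc_sum_mul_sub_le_one {p : S → ℝ} (hp₀ : ∀ s, 0 ≤ p s) (hp₁ : ∑ s, p s = 1)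
    (hVend : ∀ s, V (H + 1) s = 0) (hV2 : ∀ s, V 2 s ≤ 1) (hH : 1 ≤ H) :
    ∑ j ∈ Icc 1 (H - 1), ∑ s, p s * (V (j + 1) s - V (j + 2) s) ≤ 1 := by
  have htel : ∀ s, ∑ j ∈ Icc 1 (H - 1), (V (j + 1) s - V (j + 2) s) = V 2 s := by
    intro s
    have := sum_Ico_sub (f := fun j => V (j + 1) s) hH
    rw [Icc_sub_one_right_eq_Ico_of_not_isMin (by simp; omega), ← neg_inj, ← sum_neg_distrib]
    simp only [neg_sub] at this ⊢
    rw [this, hVend, zero_sub]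
  calc ∑ j ∈ Icc 1 (H - 1), ∑ s, p s * (V (j + 1) s - V (j + 2) s)
      = ∑ s, p s * V 2 s := by
        rw [sum_comm]
        simp only [← mul_sum, htel]
    _ ≤ ∑ s, p s * 1 := by gcongr with s; exacts [hp₀ s, hV2 s]
    _ = 1 := by simpa using hp₁

end Bellman

theorem total_variation_le_general (S A : Type*) [Fintype S] [Nonempty S] [Fintype A] [Nonempty A]
    (d H : ℕ)
    (φ : S → A → EuclideanSpace ℝ (Fin d)) (μ : S → EuclideanSpace ℝ (Fin d))
    (hprob_nonneg : ∀ s a s', 0 ≤ ⟪φ s a, μ s'⟫)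
    (hprob_sum : ∀ s a, ∑ s', ⟪φ s a, μ s'⟫ = 1)
    (r : S → A → ℝ) (hr : ∀ s a, 0 ≤ r s a)
    (V : ℕ → S → ℝ)
    (hVend : ∀ s, V (H + 1) s = 0)
    (hVrec : ∀ h, 1 ≤ h → h ≤ H → ∀ s,
      V h s = Finset.univ.sup' Finset.univ_nonempty
        (fun a => r s a + ∑ s', ⟪φ s a, μ s'⟫ * V (h + 1) s'))
    (hV1 : ∀ s, V 1 s ≤ 1) :
    ∑ h ∈ Finset.Icc 1 (H - 1),
        (Finset.univ.sup' Finset.univ_nonempty fun s => |V h s - V (h + 1) s|)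
      ≤ 2 * d := by
  have hanti {h : ℕ} (h1 : 1 ≤ h) (hH : h ≤ H) : V (h + 1) ≤ V h :=
    value_antitone hprob_nonneg hr hVend hVrec h1 hH
  choose σ α hstep using fun h : Icc 1 (H - 1) =>
    have hh := mem_Icc.1 h.2
    exists_sup'_abs_sub_le hVrec hh.1 (by omega) (hanti hh.1 (by omega))
  let x (i : Icc 1 (H - 1)) := φ (σ i) (α i)
  let y (j : Icc 1 (H - 1)) := ∑ s', (V (j + 1) s' - V (j + 2) s') • μ s'
  have hxy (i j) : ⟪x i, y j⟫ = ∑ s', ⟪x i, μ s'⟫ * (V (j + 1) s' - V (j + 2) s') := by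
    simp [x, y, inner_sum, inner_smul_right, mul_comm]
  have hxy₀ (i j) : 0 ≤ ⟪x i, y j⟫ := by
    have hj := mem_Icc.1 j.2
    exact hxy i j ▸ sum_nonneg fun s' _ =>
      mul_nonneg (hprob_nonneg _ _ _) (sub_nonneg.2 (hanti (by omega) (by omega) s'))
  have hxy₁ (i) : ∑ j, ⟪x i, y j⟫ ≤ 1 := by
    have hi := mem_Icc.1 i.2
    have := sum_Icc_sum_mul_sub_le_one (hprob_nonneg (σ i) (α i)) (hprob_sum (σ i) (α i)) hVend
      (fun s => (hanti le_rfl (by omega) s).trans (hV1 s)) (by omega)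
    rw [← sum_coe_sort] at this
    simpa only [hxy] using this
  rw [← sum_coe_sort]
  calc _ ≤ ∑ i, ⟪x i, y i⟫ := sum_le_sum fun i _ => (hstep i).trans_eq (hxy i i).symm
    _ ≤ Module.finrank ℝ (EuclideanSpace ℝ (Fin d)) := sum_inner_self_le_finrank x y hxy₀ hxy₁
    _ ≤ 2 * d := by rw [finrank_euclideanSpace_fin]; linarith

/-- Structural total-variation lemma: in a finite linear MDP with features of dimension `d`,
total rewards bounded by `1`, and value functions defined by backward induction,
`Σ_{h=1}^{H-1} ‖V_h - V_{h+1}‖_∞ ≤ 2d`. -/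
theorem total_variation_le (S A : Type*) [Fintype S] [Nonempty S] [Fintype A] [Nonempty A]
    (d H : ℕ) (hd : 1 ≤ d) (hH : 2 ≤ H)
    (φ : S → A → EuclideanSpace ℝ (Fin d)) (μ : S → EuclideanSpace ℝ (Fin d))
    (hprob_nonneg : ∀ s a s', 0 ≤ ⟪φ s a, μ s'⟫)
    (hprob_sum : ∀ s a, ∑ s', ⟪φ s a, μ s'⟫ = 1)
    (r : S → A → ℝ) (hr : ∀ s a, 0 ≤ r s a)
    (V : ℕ → S → ℝ)
    (hVend : ∀ s, V (H + 1) s = 0)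
    (hVrec : ∀ h, 1 ≤ h → h ≤ H → ∀ s,
      V h s = Finset.univ.sup' Finset.univ_nonempty
        (fun a => r s a + ∑ s', ⟪φ s a, μ s'⟫ * V (h + 1) s'))
    (hV1 : ∀ s, V 1 s ≤ 1) :
    ∑ h ∈ Finset.Icc 1 (H - 1),
        (Finset.univ.sup' Finset.univ_nonempty fun s => |V h s - V (h + 1) s|)
      ≤ 2 * d :=
  total_variation_le_general S A d H φ μ hprob_nonneg hprob_sum r hr V hVend hVrec hV1
end
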